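/- If a₁ and a₂ are both approximations of a total value a (a₁ ≺ a and a₂ ≺ a), then their join a₁ ⊔ a₂ is also an approximation of a: a₁ ⊔ a₂ ≺ a. -/
import Mathlib


/-! Types of the calculus: A, B ::= bool | list A | T A -/
inductive Ty : Type
  | bool : Ty
  | list : Ty → Ty
  | thunk : Ty → Ty

/-- Total values (elements of ⟦A⟧_eval; thunks are transparent). -/
inductive Val : Type
  | vtrue : Val
  | vfalse : Val
  | nil : Val
  | cons : Val → Val → Val

/-- Approximation values (elements of ⟦A⟧_approx). -/
inductive Approx : Type
  | bot : Approx
  | thunk : Approx → Approx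
  | atrue : Approx
  | afalse : Approx
  | nil : Approx
  | cons : Approx → Approx → Approx

/-- Membership of a total value in ⟦A⟧_eval (with ⟦T A⟧_eval = ⟦A⟧_eval). -/
inductive Val.HasTy : Val → Ty → Prop
  | vtrue : Val.HasTy .vtrue .bool
  | vfalse : Val.HasTy .vfalse .bool
  | nil {A} : Val.HasTy .nil (.list A)
  | cons {A a b} : Val.HasTy a A → Val.HasTy b (.list A) → Val.HasTy (.cons a b) (.list A)
  | thunk {A a} : Val.HasTy a A → Val.HasTy a (.thunk A)

/-- Membership of an approximation in ⟦A⟧_approx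
    (⟦T A⟧_approx = {⊥} ⊎ {thunk a | a ∈ ⟦A⟧_approx}). -/
inductive Approx.HasTy : Approx → Ty → Prop
  | bot {A} : Approx.HasTy .bot (.thunk A)
  | thunk {A a} : Approx.HasTy a A → Approx.HasTy (.thunk a) (.thunk A)
  | atrue : Approx.HasTy .atrue .bool
  | afalse : Approx.HasTy .afalse .bool
  | nil {A} : Approx.HasTy .nil (.list A)
  | cons {A a b} : Approx.HasTy a (.thunk A) → Approx.HasTy b (.thunk (.list A)) →
      Approx.HasTy (.cons a b) (.list A)

/-- Definedness order `a ≤ b` on approximations: reflexivity, ⊥ least,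
    thunk and cons monotone. -/
inductive ApproxLE : Approx → Approx → Prop
  | refl {a} : ApproxLE a a
  | bot {a} : ApproxLE .bot a
  | thunk {a b} : ApproxLE a b → ApproxLE (.thunk a) (.thunk b)
  | cons {a b c d} : ApproxLE a c → ApproxLE b d → ApproxLE (.cons a b) (.cons c d)

/-- Approximation relation `a' ≺ a` between an approximation and a total value. -/
inductive ApproxOf : Approx → Val → Prop
  | bot {a} : ApproxOf .bot a
  | nil : ApproxOf .nil .nil
  | atrue : ApproxOf .atrue .vtrue
  | afalse : ApproxOf .afalse .vfalse
  | thunk {a b} : ApproxOf a b → ApproxOf (.thunk a) b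
  | cons {a b c d} : ApproxOf a c → ApproxOf b d → ApproxOf (.cons a b) (.cons c d)

/-- Join `a₁ ⊔ a₂` of two approximations (of the same total value;
    the remaining mismatched-constructor cases cannot arise and are junk). -/
def joinA : Approx → Approx → Approx
  | .bot, b => b
  | a, .bot => a
  | .thunk a, .thunk b => .thunk (joinA a b)
  | .cons a b, .cons c d => .cons (joinA a c) (joinA b d)
  | .nil, .nil => .nil
  | a, _ => a

/-- Least approximation ⊥_a of a total value a at type A. -/
def botApprox : Ty → Val → Approx
  | .thunk _, _ => .bot
  | _, .nil => .nil
  | _, .cons _ _ => .cons .bot .bot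
  | _, .vtrue => .atrue
  | _, .vfalse => .afalse

/-- **Supremum, part 1**: if `a₁ ≺ a` and `a₂ ≺ a` are approximations (in ⟦A⟧_approx)
    of a total value `a ∈ ⟦A⟧_eval`, then their join is also an approximation of `a`:
    `a₁ ⊔ a₂ ≺ a`. -/
theorem join_approxOf {A : Ty} {a : Val} {a₁ a₂ : Approx}
    (ha : Val.HasTy a A)
    (h₁ty : Approx.HasTy a₁ A) (h₂ty : Approx.HasTy a₂ A)
    (h₁ : ApproxOf a₁ a) (h₂ : ApproxOf a₂ a) :
    ApproxOf (joinA a₁ a₂) a := by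
  induction h₁ty generalizing a a₂ with
  | bot => simpa [joinA] using h₂
  | thunk ht ih =>
    cases h₂ty with
    | bot => cases h₁ with | thunk h => simpa [joinA] using ApproxOf.thunk h
    | thunk ht₂ =>
      cases h₁ with | thunk h₁' =>
      cases h₂ with | thunk h₂' =>
      cases ha with | thunk ha' =>
      exact ApproxOf.thunk (ih ha' ht₂ h₁' h₂')
  | atrue =>
    cases h₁
    cases h₂ty with
    | atrue => exact ApproxOf.atrue
    | afalse => cases h₂
  | afalse =>
    cases h₁
    cases h₂ty with
    | afalse => exact ApproxOf.afalse
    | atrue => cases h₂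
  | nil =>
    cases h₁
    cases h₂ty with
    | nil => exact ApproxOf.nil
    | cons _ _ => cases h₂
  | cons ht₁ ht₂ ih₁ ih₂ =>
    cases h₁ with | cons hx hy =>
    cases h₂ty with
    | nil => cases h₂
    | cons ht₃ ht₄ =>
      cases h₂ with | cons hx₂ hy₂ =>
      cases ha with | cons hc hd =>
      exact ApproxOf.cons (ih₁ (Val.HasTy.thunk hc) ht₃ hx hx₂)
        (ih₂ (Val.HasTy.thunk hd) ht₄ hy hy₂)
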